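/- arXiv:2603.09433 — 2 statements merged into one kernel-verified Lean document; each statement's English description precedes it below -/
import Mathlib

section
/- Let L₁ and L₂ be strongly connected monogamous acyclic Σ-hypergraphs, and let S be a quotient of L₁ + L₂ obtained by a gluing scheme. If an output node A of L₁ is glued to an input node B of L₂, and additionally some input node X of L₁ is glued to some output node Y of L₂, then S contains a cycle (hence does not yield a pre-critical pair, whose source must be acyclic). -/
structure MAHypergraph (σ : Type) : Type 1 where
  V : Type
  E : Type
  s : E → List V
  t : E → List V
  l : E → σ

namespace MAHypergraph
variable {σ : Type}

structure Hom (G H : MAHypergraph σ) : Type where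
  fV : G.V → H.V
  fE : G.E → H.E
  src : ∀ e, (G.s e).map fV = H.s (fE e)
  tgt : ∀ e, (G.t e).map fV = H.t (fE e)
  lbl : ∀ e, G.l e = H.l (fE e)

def Hom.comp {G H K : MAHypergraph σ} (f : Hom G H) (g : Hom H K) : Hom G K where
  fV := fun v => g.fV (f.fV v)
  fE := fun e => g.fE (f.fE e)
  src := fun e => by
    have : (G.s e).map (fun v => g.fV (f.fV v)) = ((G.s e).map f.fV).map g.fV := by
      simp [List.map_map, Function.comp]
    rw [this, f.src, g.src]
  tgt := fun e => by
    have : (G.t e).map (fun v => g.fV (f.fV v)) = ((G.t e).map f.fV).map g.fV := by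
      simp [List.map_map, Function.comp]
    rw [this, f.tgt, g.tgt]
  lbl := fun e => by rw [f.lbl, g.lbl]

def Adj (G : MAHypergraph σ) (e e' : G.E) : Prop := ∃ v, v ∈ G.t e ∧ v ∈ G.s e'

def IsPath (G : MAHypergraph σ) (p : List G.E) : Prop := p ≠ [] ∧ p.Chain' G.Adj

def PathFrom (G : MAHypergraph σ) (v w : G.V) (p : List G.E) : Prop :=
  G.IsPath p ∧ (∃ e, p.head? = some e ∧ v ∈ G.s e) ∧ (∃ e, p.getLast? = some e ∧ w ∈ G.t e)

def IsCycle (G : MAHypergraph σ) (p : List G.E) : Prop :=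
  G.IsPath p ∧ ∃ v e e', p.head? = some e ∧ p.getLast? = some e' ∧ v ∈ G.s e ∧ v ∈ G.t e'

def Acyclic (G : MAHypergraph σ) : Prop := ∀ p, ¬ G.IsCycle p

def Monogamous (G : MAHypergraph σ) : Prop :=
  (∀ (v : G.V) (e e' : G.E) (i i' : ℕ),
      (G.t e)[i]? = some v → (G.t e')[i']? = some v → e = e' ∧ i = i') ∧
  (∀ (v : G.V) (e e' : G.E) (i i' : ℕ),
      (G.s e)[i]? = some v → (G.s e')[i']? = some v → e = e' ∧ i = i')

def IsInput (G : MAHypergraph σ) (v : G.V) : Prop := ∀ e, v ∉ G.t e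
def IsOutput (G : MAHypergraph σ) (v : G.V) : Prop := ∀ e, v ∉ G.s e

def StronglyConnected (G : MAHypergraph σ) : Prop :=
  ∀ x, G.IsInput x → ∀ y, G.IsOutput y → ∃ p, G.PathFrom x y p

def coprod (G H : MAHypergraph σ) : MAHypergraph σ where
  V := G.V ⊕ H.V
  E := G.E ⊕ H.E
  s := Sum.elim (fun e => (G.s e).map Sum.inl) (fun e => (H.s e).map Sum.inr)
  t := Sum.elim (fun e => (G.t e).map Sum.inl) (fun e => (H.t e).map Sum.inr)
  l := Sum.elim G.l H.l

def inlHom (G H : MAHypergraph σ) : Hom G (coprod G H) :=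
  ⟨Sum.inl, Sum.inl, fun _ => rfl, fun _ => rfl, fun _ => rfl⟩

def inrHom (G H : MAHypergraph σ) : Hom H (coprod G H) :=
  ⟨Sum.inr, Sum.inr, fun _ => rfl, fun _ => rfl, fun _ => rfl⟩

instance : CategoryTheory.Category (MAHypergraph σ) where
  Hom := Hom
  id G := ⟨fun v => v, fun e => e, fun e => by simp, fun e => by simp, fun _ => rfl⟩
  comp f g := f.comp g
  id_comp f := rfl
  comp_id f := rfl
  assoc f g h := rfl

end MAHypergraph

namespace MAHypergraph
variable {σ : Type} {G H : MAHypergraph σ}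

lemma Hom.mem_s (f : Hom G H) {v e} (h : v ∈ G.s e) : f.fV v ∈ H.s (f.fE e) := by
  rw [← f.src]; exact List.mem_map_of_mem h

lemma Hom.mem_t (f : Hom G H) {v e} (h : v ∈ G.t e) : f.fV v ∈ H.t (f.fE e) := by
  rw [← f.tgt]; exact List.mem_map_of_mem h

lemma Hom.adj (f : Hom G H) {e e'} (h : G.Adj e e') : H.Adj (f.fE e) (f.fE e') := by
  obtain ⟨v, hv, hv'⟩ := h
  exact ⟨f.fV v, f.mem_t hv, f.mem_s hv'⟩

lemma Hom.isPath_map (f : Hom G H) {p : List G.E} (hp : G.IsPath p) :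
    H.IsPath (p.map f.fE) :=
  ⟨by simpa using hp.1, (List.isChain_map _).mpr (hp.2.imp fun _ _ => f.adj)⟩

lemma Hom.pathFrom_map (f : Hom G H) {v w : G.V} {p : List G.E} (hp : G.PathFrom v w p) :
    H.PathFrom (f.fV v) (f.fV w) (p.map f.fE) := by
  obtain ⟨hpath, ⟨e, he, hv⟩, ⟨e', he', hw⟩⟩ := hp
  exact ⟨f.isPath_map hpath, ⟨f.fE e, by simp [he], f.mem_s hv⟩,
    ⟨f.fE e', by simp [he'], f.mem_t hw⟩⟩

lemma PathFrom.append {u v w : G.V} {p q : List G.E} (hp : G.PathFrom u v p)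
    (hq : G.PathFrom v w q) : G.PathFrom u w (p ++ q) := by
  obtain ⟨⟨hne, hch⟩, ⟨e, he, hu⟩, ⟨e', he', hv⟩⟩ := hp
  obtain ⟨⟨hne', hch'⟩, ⟨d, hd, hv'⟩, ⟨d', hd', hw⟩⟩ := hq
  refine ⟨⟨by simp [hne], ?_⟩, ⟨e, ?_, hu⟩, ⟨d', ?_, hw⟩⟩
  · refine List.isChain_append.mpr ⟨hch, hch', ?_⟩
    rintro x hx y hy
    obtain rfl : x = e' := Option.some_injective _ (hx.symm.trans he')
    obtain rfl : y = d := Option.some_injective _ (hy.symm.trans hd)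
    exact ⟨v, hv, hv'⟩
  · rw [List.head?_append_of_ne_nil _ hne, he]
  · rw [List.getLast?_append_of_ne_nil _ hne', hd']

lemma PathFrom.isCycle {v : G.V} {p : List G.E} (hp : G.PathFrom v v p) : G.IsCycle p := by
  obtain ⟨hpath, ⟨e, he, hs⟩, ⟨e', he', ht⟩⟩ := hp
  exact ⟨hpath, v, e, e', he, he', hs, ht⟩

end MAHypergraph

theorem Hypergraph.opposite_io_gluings_create_cycle_general {σ : Type} {L₁ L₂ S : MAHypergraph σ}
    (h₁c : L₁.StronglyConnected) (h₂c : L₂.StronglyConnected)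
    (ε : MAHypergraph.Hom (MAHypergraph.coprod L₁ L₂) S)
    (A : L₁.V) (hA : L₁.IsOutput A) (B : L₂.V) (hB : L₂.IsInput B)
    (X : L₁.V) (hX : L₁.IsInput X) (Y : L₂.V) (hY : L₂.IsOutput Y)
    (hAB : ε.fV (Sum.inl A) = ε.fV (Sum.inr B))
    (hXY : ε.fV (Sum.inl X) = ε.fV (Sum.inr Y)) :
    ∃ c, S.IsCycle c := by
  obtain ⟨p₁, hp₁⟩ := h₁c X hX A hA
  obtain ⟨p₂, hp₂⟩ := h₂c B hB Y hY
  have hXA := ((MAHypergraph.inlHom L₁ L₂).comp ε).pathFrom_map hp₁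
  have hBY := ((MAHypergraph.inrHom L₁ L₂).comp ε).pathFrom_map hp₂
  change S.PathFrom (ε.fV (.inl X)) (ε.fV (.inl A)) _ at hXA
  change S.PathFrom (ε.fV (.inr B)) (ε.fV (.inr Y)) _ at hBY
  rw [hAB, hXY] at hXA
  exact ⟨_, (hXA.append hBY).isCycle⟩

/-- If in a quotient S of the coproduct of two strongly connected ma-hypergraphs,
an output A of the first is glued to an input B of the second, and an input X of
the first is glued to an output Y of the second, then S contains a cycle. -/
theorem Hypergraph.opposite_io_gluings_create_cycle {σ : Type} {L₁ L₂ S : MAHypergraph σ}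
    (h₁m : L₁.Monogamous) (h₁a : L₁.Acyclic) (h₁c : L₁.StronglyConnected)
    (h₂m : L₂.Monogamous) (h₂a : L₂.Acyclic) (h₂c : L₂.StronglyConnected)
    (ε : MAHypergraph.Hom (MAHypergraph.coprod L₁ L₂) S)
    (hsurjV : Function.Surjective ε.fV) (hsurjE : Function.Surjective ε.fE)
    (A : L₁.V) (hA : L₁.IsOutput A) (B : L₂.V) (hB : L₂.IsInput B)
    (X : L₁.V) (hX : L₁.IsInput X) (Y : L₂.V) (hY : L₂.IsOutput Y)
    (hAB : ε.fV (Sum.inl A) = ε.fV (Sum.inr B))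
    (hXY : ε.fV (Sum.inl X) = ε.fV (Sum.inr Y)) :
    ∃ c, S.IsCycle c :=
  Hypergraph.opposite_io_gluings_create_cycle_general h₁c h₂c ε A hA B hB X hX Y hY hAB hXY
end

section
/- If a gluing scheme glues two distinct nodes that both come from L₁ (i.e., both in the first summand of L₁ + L₂), then the composite of the first coprojection ι₁ : L₁ → L₁ + L₂ with the coequalizer map ε : L₁ + L₂ → coeq is not a monomorphism; hence the gluing scheme does not yield a pre-critical pair. -/
structure SHypergraph (σ : Type) : Type 1 where
  V : Type
  E : Type
  s : E → List V
  t : E → List V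
  l : E → σ

namespace SHypergraph
variable {σ : Type}

structure Hom (G H : SHypergraph σ) : Type where
  fV : G.V → H.V
  fE : G.E → H.E
  src : ∀ e, (G.s e).map fV = H.s (fE e)
  tgt : ∀ e, (G.t e).map fV = H.t (fE e)
  lbl : ∀ e, G.l e = H.l (fE e)

def Hom.comp {G H K : SHypergraph σ} (f : Hom G H) (g : Hom H K) : Hom G K where
  fV := fun v => g.fV (f.fV v)
  fE := fun e => g.fE (f.fE e)
  src := fun e => by
    have : (G.s e).map (fun v => g.fV (f.fV v)) = ((G.s e).map f.fV).map g.fV := by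
      simp [List.map_map, Function.comp]
    rw [this, f.src, g.src]
  tgt := fun e => by
    have : (G.t e).map (fun v => g.fV (f.fV v)) = ((G.t e).map f.fV).map g.fV := by
      simp [List.map_map, Function.comp]
    rw [this, f.tgt, g.tgt]
  lbl := fun e => by rw [f.lbl, g.lbl]

def Adj (G : SHypergraph σ) (e e' : G.E) : Prop := ∃ v, v ∈ G.t e ∧ v ∈ G.s e'

def IsPath (G : SHypergraph σ) (p : List G.E) : Prop := p ≠ [] ∧ p.Chain' G.Adj

def PathFrom (G : SHypergraph σ) (v w : G.V) (p : List G.E) : Prop :=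
  G.IsPath p ∧ (∃ e, p.head? = some e ∧ v ∈ G.s e) ∧ (∃ e, p.getLast? = some e ∧ w ∈ G.t e)

def IsCycle (G : SHypergraph σ) (p : List G.E) : Prop :=
  G.IsPath p ∧ ∃ v e e', p.head? = some e ∧ p.getLast? = some e' ∧ v ∈ G.s e ∧ v ∈ G.t e'

def Acyclic (G : SHypergraph σ) : Prop := ∀ p, ¬ G.IsCycle p

def Monogamous (G : SHypergraph σ) : Prop :=
  (∀ (v : G.V) (e e' : G.E) (i i' : ℕ),
      (G.t e)[i]? = some v → (G.t e')[i']? = some v → e = e' ∧ i = i') ∧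
  (∀ (v : G.V) (e e' : G.E) (i i' : ℕ),
      (G.s e)[i]? = some v → (G.s e')[i']? = some v → e = e' ∧ i = i')

def IsInput (G : SHypergraph σ) (v : G.V) : Prop := ∀ e, v ∉ G.t e
def IsOutput (G : SHypergraph σ) (v : G.V) : Prop := ∀ e, v ∉ G.s e

def StronglyConnected (G : SHypergraph σ) : Prop :=
  ∀ x, G.IsInput x → ∀ y, G.IsOutput y → ∃ p, G.PathFrom x y p

def coprod (G H : SHypergraph σ) : SHypergraph σ where
  V := G.V ⊕ H.V
  E := G.E ⊕ H.E
  s := Sum.elim (fun e => (G.s e).map Sum.inl) (fun e => (H.s e).map Sum.inr)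
  t := Sum.elim (fun e => (G.t e).map Sum.inl) (fun e => (H.t e).map Sum.inr)
  l := Sum.elim G.l H.l

def inlHom (G H : SHypergraph σ) : Hom G (coprod G H) :=
  ⟨Sum.inl, Sum.inl, fun _ => rfl, fun _ => rfl, fun _ => rfl⟩

def inrHom (G H : SHypergraph σ) : Hom H (coprod G H) :=
  ⟨Sum.inr, Sum.inr, fun _ => rfl, fun _ => rfl, fun _ => rfl⟩

instance : CategoryTheory.Category (SHypergraph σ) where
  Hom := Hom
  id G := ⟨fun v => v, fun e => e, fun e => by simp, fun e => by simp, fun _ => rfl⟩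
  comp f g := f.comp g
  id_comp f := rfl
  comp_id f := rfl
  assoc f g h := rfl

end SHypergraph

/-!
Right-cancellation against the morphisms out of the one-vertex hypergraph shows that a
monomorphism of hypergraphs is injective on vertices. The coequalizer map `ε` identifies the
images `inl x` and `inl x'` of the glued node `y`, so `inl ≫ ε` is not injective on the
vertices of `L₁`.
-/

namespace SHypergraph

open CategoryTheory (Mono cancel_mono)
open scoped CategoryTheory

variable {σ : Type}

@[ext]
theorem Hom.ext {G H : SHypergraph σ} {f g : Hom G H} (hV : f.fV = g.fV) (hE : f.fE = g.fE) :
    f = g := by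
  cases f; cases g; cases hV; cases hE; rfl

@[simp]
theorem comp_fV {G H K : SHypergraph σ} (f : G ⟶ H) (g : H ⟶ K) (v : G.V) :
    (f ≫ g).fV v = g.fV (f.fV v) :=
  rfl

def point : SHypergraph σ :=
  ⟨PUnit, PEmpty, nofun, nofun, nofun⟩

def pointHom (G : SHypergraph σ) (v : G.V) : (point : SHypergraph σ) ⟶ G :=
  ⟨fun _ => v, nofun, nofun, nofun, nofun⟩

theorem Hom.fV_injective_of_mono {G H : SHypergraph σ} (f : G ⟶ H) [Mono f] :
    Function.Injective f.fV := by
  intro v w hvw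
  have hcomp : pointHom G v ≫ f = pointHom G w ≫ f :=
    Hom.ext (funext fun _ => hvw) (funext nofun)
  exact congrArg (fun h : Hom point G => h.fV PUnit.unit) (cancel_mono f |>.mp hcomp)

end SHypergraph

open CategoryTheory in
/-- If a gluing scheme glues two distinct nodes both coming from L₁, then the
composite of the first coprojection with the coequalizer map is not a monomorphism. -/
theorem Hypergraph.glue_within_summand_not_mono {σ : Type}
    {L₁ L₂ G S : SHypergraph σ}
    (g₁ g₂ : G ⟶ SHypergraph.coprod L₁ L₂) (ε : SHypergraph.coprod L₁ L₂ ⟶ S)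
    (hcoeq : g₁ ≫ ε = g₂ ≫ ε)
    (x x' : L₁.V) (hne : x ≠ x') (y : G.V)
    (hy₁ : SHypergraph.Hom.fV g₁ y = Sum.inl x)
    (hy₂ : SHypergraph.Hom.fV g₂ y = Sum.inl x') :
    ¬ Mono (SHypergraph.inlHom L₁ L₂ ≫ ε) := by
  intro hmono
  have hglued : ε.fV (Sum.inl x) = ε.fV (Sum.inl x') := by
    simpa only [SHypergraph.comp_fV, hy₁, hy₂] using congrArg (fun h => h.fV y) hcoeq
  exact hne (SHypergraph.Hom.fV_injective_of_mono (SHypergraph.inlHom L₁ L₂ ≫ ε) hglued)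
end
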